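/- Let K be a consistent and deductively closed set of propositional formulas, let {Φ_C, Φ_A, Φ_R} be a credibility partition of the set Φ of all formulas, and let B°_K : Φ → 2^Φ be a filtered belief revision function based on K. Then there exists a basic AGM belief revision function B*_K : Φ → 2^Φ such that for all φ ∈ Φ: B°_K(φ) = K if φ ∈ Φ_R, B°_K(φ) = B*_K(φ) if φ ∈ Φ_C, and B°_K(φ) = K ∩ B*_K(φ) if φ ∈ Φ_A. -/

import Mathlib

/-! Propositional language built from a set of atomic formulas via negation and disjunction. -/

inductive PropForm (α : Type) : Type
  | atom : α → PropForm α
  | neg : PropForm α → PropForm α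
  | or : PropForm α → PropForm α → PropForm α

namespace PropForm

/-- Truth value of a formula under a boolean valuation of the atoms. -/
def eval (v : α → Bool) : PropForm α → Bool
  | atom a => v a
  | neg φ => !(eval v φ)
  | or φ ψ => (eval v φ) || (eval v ψ)

/-- Conjunction, defined from negation and disjunction. -/
def and (φ ψ : PropForm α) : PropForm α := neg (or (neg φ) (neg ψ))

/-- Material implication. -/
def imp (φ ψ : PropForm α) : PropForm α := or (neg φ) ψ

/-- Biconditional. -/
def biimp (φ ψ : PropForm α) : PropForm α := and (imp φ ψ) (imp ψ φ)

/-- A formula is a tautology if it is true under every boolean valuation. -/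
def Tautology (φ : PropForm α) : Prop := ∀ v : α → Bool, eval v φ = true

/-- A formula is a contradiction if it is false under every boolean valuation. -/
def Contradiction (φ : PropForm α) : Prop := ∀ v : α → Bool, eval v φ = false

end PropForm

open PropForm

/-- The PL-deductive closure of `F`: ψ ∈ [F]^PL iff there are φ₁,…,φₙ ∈ F (n ≥ 0) such that
(φ₁ ∧ … ∧ φₙ) → ψ is a tautology (stated via the equivalent curried implication
φ₁ → (φ₂ → ⋯ → ψ)). -/
def Cn (F : Set (PropForm α)) : Set (PropForm α) :=
  {ψ | ∃ l : List (PropForm α), (∀ φ ∈ l, φ ∈ F) ∧ Tautology (l.foldr PropForm.imp ψ)}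

/-- A set of formulas is consistent if its deductive closure is not the set of all formulas. -/
def ConsistentSet (F : Set (PropForm α)) : Prop := Cn F ≠ Set.univ

/-- A set of formulas is deductively closed if it equals its own deductive closure. -/
def DedClosed (F : Set (PropForm α)) : Prop := F = Cn F

/-- A credibility partition of the set of formulas into credible (ΦC), allowable (ΦA) and
rejected (ΦR) formulas. -/
structure CredPartition (ΦC ΦA ΦR : Set (PropForm α)) : Prop where
  disjCA : Disjoint ΦC ΦA
  disjCR : Disjoint ΦC ΦR
  disjAR : Disjoint ΦA ΦR
  cover : ΦC ∪ ΦA ∪ ΦR = Set.univ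
  taut_mem_C : ∀ φ : PropForm α, Tautology φ → φ ∈ ΦC
  C_consistent : ∀ φ ∈ ΦC, ¬ Contradiction φ
  C_equiv_closed : ∀ φ ψ : PropForm α, Tautology (φ.biimp ψ) → φ ∈ ΦC → ψ ∈ ΦC
  A_consistent : ∀ φ ∈ ΦA, ¬ Contradiction φ
  A_equiv_closed : ∀ φ ψ : PropForm α, Tautology (φ.biimp ψ) → φ ∈ ΦA → ψ ∈ ΦA
  contra_mem_R : ∀ φ : PropForm α, Contradiction φ → φ ∈ ΦR

/-- Basic AGM belief revision function based on K: postulates AGM1–AGM6. -/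
structure IsBasicAGM (K : Set (PropForm α)) (B : PropForm α → Set (PropForm α)) : Prop where
  agm1 : ∀ φ : PropForm α, B φ = Cn (B φ)
  agm2 : ∀ φ : PropForm α, φ ∈ B φ
  agm3 : ∀ φ : PropForm α, B φ ⊆ Cn (K ∪ {φ})
  agm4 : ∀ φ : PropForm α, φ.neg ∉ K → Cn (K ∪ {φ}) ⊆ B φ
  agm5 : ∀ φ : PropForm α, B φ = Set.univ ↔ Contradiction φ
  agm6 : ∀ φ ψ : PropForm α, Tautology (φ.biimp ψ) → B φ = B ψ

/-- Filtered belief revision function based on K, relative to a credibility partition. -/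
structure IsFiltered (ΦC ΦA ΦR K : Set (PropForm α))
    (B : PropForm α → Set (PropForm α)) : Prop where
  f1 : ∀ φ ∈ ΦR, B φ = K
  f2a : ∀ φ : PropForm α, φ.neg ∉ K → φ ∈ ΦC → B φ = Cn (K ∪ {φ})
  f2b : ∀ φ : PropForm α, φ.neg ∉ K → φ ∈ ΦA → B φ = K
  f3 : ∀ φ : PropForm α, φ.neg ∈ K → ConsistentSet (B φ) ∧ DedClosed (B φ)
  f3a : ∀ φ : PropForm α, φ.neg ∈ K → φ ∈ ΦC → φ ∈ B φ
  f3b : ∀ φ : PropForm α, φ.neg ∈ K → φ ∈ ΦA →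
    B φ ⊆ K \ {φ.neg} ∧ Cn (B φ ∪ {φ.neg}) = K
  f4 : ∀ φ ψ : PropForm α, Tautology (φ.biimp ψ) → B φ = B ψ

/-! If `¬φ ∉ K`, take `B*_K(φ) = [K ∪ {φ}]`; otherwise take `[B°_K(φ) ∪ {φ}]`, or `[{φ}]` when `φ`
is rejected. For credible `φ` this is `B°_K(φ)` itself, which is closed and contains `φ`. For
allowable `φ` with `¬φ ∈ K`, proof by cases gives `[B ∪ {φ}] ∩ [B ∪ {¬φ}] = [B]`, and
`[B°_K(φ) ∪ {¬φ}] = K`, whence `B°_K(φ) = K ∩ B*_K(φ)`. -/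

namespace PropForm

variable {α : Type}

@[simp] lemma eval_neg (v : α → Bool) (φ : PropForm α) : eval v φ.neg = !eval v φ := rfl

@[simp] lemma eval_imp (v : α → Bool) (φ ψ : PropForm α) :
    eval v (φ.imp ψ) = (!eval v φ || eval v ψ) := rfl

lemma tautology_biimp_iff {φ ψ : PropForm α} :
    Tautology (φ.biimp ψ) ↔ ∀ v, eval v φ = eval v ψ := by
  refine forall_congr' fun v => ?_
  cases h₁ : eval v φ <;> cases h₂ : eval v ψ <;> simp [biimp, PropForm.and, imp, eval, h₁, h₂]

lemma Tautology.biimp_symm {φ ψ : PropForm α} (h : Tautology (φ.biimp ψ)) :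
    Tautology (ψ.biimp φ) :=
  tautology_biimp_iff.2 fun v => (tautology_biimp_iff.1 h v).symm

lemma tautology_neg_iff {φ : PropForm α} : Tautology φ.neg ↔ Contradiction φ := by
  simp [Tautology, Contradiction]

lemma eval_foldr_imp (v : α → Bool) (l : List (PropForm α)) (ψ : PropForm α) :
    eval v (l.foldr imp ψ) = true ↔ ((∀ x ∈ l, eval v x = true) → eval v ψ = true) := by
  induction l with
  | nil => simp
  | cons a t ih => cases h : eval v a <;> simp [h, ih]

end PropForm

section Closure

variable {α : Type} {F G : Set (PropForm α)} {φ ψ χ : PropForm α}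

lemma mem_Cn_iff : ψ ∈ Cn F ↔ ∃ l : List (PropForm α), (∀ x ∈ l, x ∈ F) ∧
    ∀ v, (∀ x ∈ l, eval v x = true) → eval v ψ = true :=
  exists_congr fun l => and_congr_right fun _ => forall_congr' fun v => eval_foldr_imp v l ψ

lemma subset_Cn : F ⊆ Cn F :=
  fun φ hφ => mem_Cn_iff.2 ⟨[φ], by simpa using hφ, fun v hv => hv φ (by simp)⟩

lemma exists_list_entails_of_forall_mem_Cn {l : List (PropForm α)} (hl : ∀ x ∈ l, x ∈ Cn F) :
    ∃ m : List (PropForm α), (∀ y ∈ m, y ∈ F) ∧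
      ∀ v, (∀ y ∈ m, eval v y = true) → ∀ x ∈ l, eval v x = true := by
  induction l with
  | nil => exact ⟨[], by simp, by simp⟩
  | cons a t ih =>
    obtain ⟨la, hlaF, hla⟩ := mem_Cn_iff.1 (hl a (by simp))
    obtain ⟨mt, hmtF, hmt⟩ := ih fun x hx => hl x (by simp [hx])
    refine ⟨la ++ mt, by simpa [or_imp, forall_and] using ⟨hlaF, hmtF⟩, fun v hv => ?_⟩
    simp only [List.mem_append, or_imp, forall_and] at hv
    simpa using ⟨hla v hv.1, hmt v hv.2⟩

lemma mem_Cn_of_entails {l : List (PropForm α)} (hl : ∀ x ∈ l, x ∈ Cn F)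
    (h : ∀ v, (∀ x ∈ l, eval v x = true) → eval v ψ = true) : ψ ∈ Cn F := by
  obtain ⟨m, hmF, hm⟩ := exists_list_entails_of_forall_mem_Cn hl
  exact mem_Cn_iff.2 ⟨m, hmF, fun v hv => h v (hm v hv)⟩

lemma mem_Cn_of_mem_of_entails (hχ : χ ∈ Cn F)
    (h : ∀ v, eval v χ = true → eval v ψ = true) : ψ ∈ Cn F :=
  mem_Cn_of_entails (l := [χ]) (by simpa using hχ) (by simpa using h)

lemma mem_Cn_of_mem_of_mem_of_entails (hφ : φ ∈ Cn F) (hχ : χ ∈ Cn F)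
    (h : ∀ v, eval v φ = true → eval v χ = true → eval v ψ = true) : ψ ∈ Cn F :=
  mem_Cn_of_entails (l := [φ, χ]) (by simp [hφ, hχ])
    fun v hv => h v (hv φ (by simp)) (hv χ (by simp))

lemma Cn_subset_Cn (h : G ⊆ Cn F) : Cn G ⊆ Cn F := fun ψ hψ => by
  obtain ⟨l, hlG, hl⟩ := mem_Cn_iff.1 hψ
  exact mem_Cn_of_entails (fun x hx => h (hlG x hx)) hl

lemma Cn_mono (h : F ⊆ G) : Cn F ⊆ Cn G :=
  Cn_subset_Cn (h.trans subset_Cn)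

lemma Cn_Cn : Cn (Cn F) = Cn F :=
  (Cn_subset_Cn subset_rfl).antisymm subset_Cn

lemma mem_Cn_empty_iff : ψ ∈ Cn (∅ : Set (PropForm α)) ↔ Tautology ψ := by
  refine mem_Cn_iff.trans ⟨fun ⟨l, hl, h⟩ v => h v fun x hx => (hl x hx).elim,
    fun h => ⟨[], by simp, fun v _ => h v⟩⟩

lemma mem_Cn_of_tautology (h : Tautology ψ) : ψ ∈ Cn F :=
  Cn_mono (Set.empty_subset F) (mem_Cn_empty_iff.2 h)

lemma mem_Cn_union_singleton_iff : ψ ∈ Cn (F ∪ {φ}) ↔ φ.imp ψ ∈ Cn F := by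
  constructor
  · intro hψ
    obtain ⟨l, hlF, hl⟩ := mem_Cn_iff.1 hψ
    refine mem_Cn_of_entails (l := l.map φ.imp) ?_ fun v hv => ?_
    · simp only [List.mem_map, forall_exists_index, and_imp, forall_apply_eq_imp_iff₂]
      intro x hx
      rcases hlF x hx with hxF | rfl
      · exact mem_Cn_of_mem_of_entails (subset_Cn hxF) (by simp_all)
      · exact mem_Cn_of_tautology fun v => by simp
    · cases hφ : eval v φ
      · simp [hφ]
      · simpa [hφ] using hl v fun x hx => by simpa [hφ] using hv _ (List.mem_map_of_mem hx)
  · intro hψ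
    exact mem_Cn_of_mem_of_mem_of_entails (subset_Cn (Set.mem_union_right F rfl))
      (Cn_mono Set.subset_union_left hψ) fun v => by cases h : eval v φ <;> simp [h]

lemma Cn_union_singleton_eq_univ_iff : Cn (F ∪ {φ}) = Set.univ ↔ φ.neg ∈ Cn F := by
  constructor
  · intro h
    have : φ.imp φ.neg ∈ Cn F := mem_Cn_union_singleton_iff.1 (h ▸ Set.mem_univ _)
    exact mem_Cn_of_mem_of_entails this fun v => by cases h : eval v φ <;> simp [h]
  · exact fun h => Set.eq_univ_of_forall fun ψ => mem_Cn_of_mem_of_mem_of_entails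
      (subset_Cn (Set.mem_union_right F rfl)) (Cn_mono Set.subset_union_left h)
      fun v h₁ h₂ => by simp [h₁] at h₂

lemma Cn_union_singleton_inter_Cn_union_neg : Cn (F ∪ {φ}) ∩ Cn (F ∪ {φ.neg}) = Cn F := by
  refine subset_antisymm (fun ψ ⟨hpos, hneg⟩ => ?_)
    (Set.subset_inter (Cn_mono Set.subset_union_left) (Cn_mono Set.subset_union_left))
  rw [mem_Cn_union_singleton_iff] at hpos hneg
  exact mem_Cn_of_mem_of_mem_of_entails hpos hneg fun v => by cases h : eval v φ <;> simp [h]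

lemma Cn_union_singleton_congr (h : Tautology (φ.biimp ψ)) :
    Cn (F ∪ {φ}) = Cn (F ∪ {ψ}) := by
  have heq := tautology_biimp_iff.1 h
  ext χ
  simp only [mem_Cn_union_singleton_iff]
  exact ⟨fun hχ => mem_Cn_of_mem_of_entails hχ (by simp [heq]),
    fun hχ => mem_Cn_of_mem_of_entails hχ (by simp [heq])⟩

lemma neg_mem_Cn_congr (h : Tautology (φ.biimp ψ)) : φ.neg ∈ Cn F ↔ ψ.neg ∈ Cn F := by
  rw [← Cn_union_singleton_eq_univ_iff, ← Cn_union_singleton_eq_univ_iff,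
    Cn_union_singleton_congr h]

lemma ConsistentSet.neg_notMem (hF : ConsistentSet F) (hφ : φ ∈ F) : φ.neg ∉ F := fun hneg =>
  hF <| Set.eq_univ_of_forall fun _ =>
    mem_Cn_of_mem_of_mem_of_entails (subset_Cn hφ) (subset_Cn hneg)
      fun v h₁ h₂ => by simp [h₁] at h₂

end Closure

theorem isBasicAGM_Cn_union_singleton {α : Type} {K : Set (PropForm α)}
    {base : PropForm α → Set (PropForm α)}
    (h_subset : ∀ φ, base φ ⊆ Cn (K ∪ {φ}))
    (h_superset : ∀ φ, φ.neg ∉ K → K ⊆ base φ)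
    (h_consistent : ∀ φ, ¬Contradiction φ → φ.neg ∉ Cn (base φ))
    (h_congr : ∀ φ ψ, Tautology (φ.biimp ψ) → base φ = base ψ) :
    IsBasicAGM K fun φ => Cn (base φ ∪ {φ}) where
  agm1 _ := Cn_Cn.symm
  agm2 φ := subset_Cn (Set.mem_union_right _ rfl)
  agm3 φ := Cn_subset_Cn (Set.union_subset (h_subset φ) (subset_Cn.trans (Cn_mono (by simp))))
  agm4 φ hφ := Cn_mono (Set.union_subset_union_left _ (h_superset φ hφ))
  agm5 φ := by
    rw [Cn_union_singleton_eq_univ_iff]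
    exact ⟨fun h => by_contra fun hφ => h_consistent φ hφ h,
      fun h => mem_Cn_of_tautology (tautology_neg_iff.2 h)⟩
  agm6 φ ψ h := by rw [h_congr φ ψ h, Cn_union_singleton_congr h]

section Filtered

variable {α : Type} {ΦC ΦA ΦR K : Set (PropForm α)} {Bo : PropForm α → Set (PropForm α)}
  {φ ψ : PropForm α}

namespace CredPartition

lemma mem_R_of_biimp (hpart : CredPartition ΦC ΦA ΦR) (h : Tautology (φ.biimp ψ))
    (hφ : φ ∈ ΦR) : ψ ∈ ΦR := by
  have hψ : ψ ∈ ΦC ∪ ΦA ∪ ΦR := hpart.cover ▸ Set.mem_univ ψ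
  rcases hψ with (hC | hA) | hR
  · exact (Set.disjoint_left.1 hpart.disjCR (hpart.C_equiv_closed ψ φ h.biimp_symm hC) hφ).elim
  · exact (Set.disjoint_left.1 hpart.disjAR (hpart.A_equiv_closed ψ φ h.biimp_symm hA) hφ).elim
  · exact hR

lemma mem_R_congr (hpart : CredPartition ΦC ΦA ΦR) (h : Tautology (φ.biimp ψ)) :
    φ ∈ ΦR ↔ ψ ∈ ΦR :=
  ⟨hpart.mem_R_of_biimp h, hpart.mem_R_of_biimp h.biimp_symm⟩

lemma mem_C_or_mem_A (hpart : CredPartition ΦC ΦA ΦR) (hφ : φ ∉ ΦR) : φ ∈ ΦC ∨ φ ∈ ΦA :=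
  (hpart.cover ▸ Set.mem_univ φ : φ ∈ ΦC ∪ ΦA ∪ ΦR).resolve_right hφ

end CredPartition

open Classical in
def filteredBase (ΦR K : Set (PropForm α)) (Bo : PropForm α → Set (PropForm α))
    (φ : PropForm α) : Set (PropForm α) :=
  if φ.neg ∈ K then (if φ ∈ ΦR then ∅ else Bo φ) else K

namespace IsFiltered

lemma neg_notMem (hfilt : IsFiltered ΦC ΦA ΦR K Bo) (hpart : CredPartition ΦC ΦA ΦR)
    (hK : φ.neg ∈ K) (hR : φ ∉ ΦR) : φ.neg ∉ Bo φ := by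
  rcases hpart.mem_C_or_mem_A hR with hC | hA
  · exact (hfilt.f3 φ hK).1.neg_notMem (hfilt.f3a φ hK hC)
  · exact fun h => ((hfilt.f3b φ hK hA).1 h).2 rfl

lemma isBasicAGM (hfilt : IsFiltered ΦC ΦA ΦR K Bo) (hpart : CredPartition ΦC ΦA ΦR)
    (hKded : DedClosed K) : IsBasicAGM K fun φ => Cn (filteredBase ΦR K Bo φ ∪ {φ}) := by
  refine isBasicAGM_Cn_union_singleton (fun φ => ?_) (fun φ hφ => ?_) (fun φ hφ => ?_)
    (fun φ ψ h => ?_)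
  · by_cases hK : φ.neg ∈ K
    · rw [Cn_union_singleton_eq_univ_iff.2 (subset_Cn hK)]
      exact Set.subset_univ _
    · rw [filteredBase, if_neg hK]
      exact Set.subset_union_left.trans subset_Cn
  · simp [filteredBase, hφ]
  · unfold filteredBase
    split_ifs with hK hR
    · rwa [mem_Cn_empty_iff, tautology_neg_iff]
    · rw [← (hfilt.f3 φ hK).2]
      exact hfilt.neg_notMem hpart hK hR
    · rwa [← hKded]
  · have hK : φ.neg ∈ K ↔ ψ.neg ∈ K := by
      rw [hKded]
      exact neg_mem_Cn_congr h
    classical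
    simp only [filteredBase, hK, hpart.mem_R_congr h, hfilt.f4 φ ψ h]

lemma eq_of_mem_C (hfilt : IsFiltered ΦC ΦA ΦR K Bo) (hpart : CredPartition ΦC ΦA ΦR)
    (hC : φ ∈ ΦC) : Bo φ = Cn (filteredBase ΦR K Bo φ ∪ {φ}) := by
  by_cases hK : φ.neg ∈ K
  · have hR : φ ∉ ΦR := Set.disjoint_left.1 hpart.disjCR hC
    rw [filteredBase, if_pos hK, if_neg hR, Set.union_singleton,
      Set.insert_eq_of_mem (hfilt.f3a φ hK hC), ← (hfilt.f3 φ hK).2]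
  · rw [filteredBase, if_neg hK, hfilt.f2a φ hK hC]

lemma eq_inter_of_mem_A (hfilt : IsFiltered ΦC ΦA ΦR K Bo) (hpart : CredPartition ΦC ΦA ΦR)
    (hA : φ ∈ ΦA) : Bo φ = K ∩ Cn (filteredBase ΦR K Bo φ ∪ {φ}) := by
  by_cases hK : φ.neg ∈ K
  · have hR : φ ∉ ΦR := Set.disjoint_left.1 hpart.disjAR hA
    rw [filteredBase, if_pos hK, if_neg hR, ← (hfilt.f3b φ hK hA).2, Set.inter_comm,
      Cn_union_singleton_inter_Cn_union_neg, ← (hfilt.f3 φ hK).2]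
  · rw [filteredBase, if_neg hK, hfilt.f2b φ hK hA,
      Set.inter_eq_left.2 (Set.subset_union_left.trans subset_Cn)]

end IsFiltered

end Filtered

theorem filtered_to_basicAGM_representation_general {α : Type}
    (ΦC ΦA ΦR K : Set (PropForm α)) (hpart : CredPartition ΦC ΦA ΦR)
    (hKded : DedClosed K)
    (Bo : PropForm α → Set (PropForm α)) (hfilt : IsFiltered ΦC ΦA ΦR K Bo) :
    ∃ Bs : PropForm α → Set (PropForm α), IsBasicAGM K Bs ∧
      ∀ φ : PropForm α,
        (φ ∈ ΦR → Bo φ = K) ∧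
        (φ ∈ ΦC → Bo φ = Bs φ) ∧
        (φ ∈ ΦA → Bo φ = K ∩ Bs φ) :=
  ⟨_, hfilt.isBasicAGM hpart hKded, fun φ =>
    ⟨hfilt.f1 φ, hfilt.eq_of_mem_C hpart, hfilt.eq_inter_of_mem_A hpart⟩⟩

/-- Proposition 1, (A) ⇒ (B): every filtered belief revision function is obtained
from some basic AGM belief revision function by filtering through the credibility partition. -/
theorem filtered_to_basicAGM_representation {α : Type} [Countable α] [Nonempty α]
    (ΦC ΦA ΦR K : Set (PropForm α)) (hpart : CredPartition ΦC ΦA ΦR)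
    (hKcons : ConsistentSet K) (hKded : DedClosed K)
    (Bo : PropForm α → Set (PropForm α)) (hfilt : IsFiltered ΦC ΦA ΦR K Bo) :
    ∃ Bs : PropForm α → Set (PropForm α), IsBasicAGM K Bs ∧
      ∀ φ : PropForm α,
        (φ ∈ ΦR → Bo φ = K) ∧
        (φ ∈ ΦC → Bo φ = Bs φ) ∧
        (φ ∈ ΦA → Bo φ = K ∩ Bs φ) :=
  filtered_to_basicAGM_representation_general ΦC ΦA ΦR K hpart hKded Bo hfilt
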